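/- arXiv:1702.06474 — 2 statements merged into one kernel-verified Lean document; each statement's English description precedes it below -/
import Mathlib

section
/- Let T be a star connection formed from stars S_{n_1},...,S_{n_r} (r ≥ 2, each n_i ≥ 3) glued at non-center vertices v_1,...,v_t, so that any two stars share at most one vertex, no center belongs to more than one star, T is a tree, and each connection vertex v_i has degree in T equal to the number of stars containing it. Then the independence number of T equals Σ_{k=1}^{r}(n_k − 1) − Σ_{i=1}^{t}(deg_T(v_i) − 1). -/
/-- An independent set of vertices: pairwise non-adjacent. -/
def IndepSet {V : Type*} (G : SimpleGraph V) (s : Set V) : Prop :=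
  s.Pairwise fun u v => ¬ G.Adj u v

/-- The independence number of a graph: the maximum cardinality of an independent set. -/
noncomputable def indepNum {V : Type*} [Fintype V] (G : SimpleGraph V) : ℕ :=
  sSup {k | ∃ s : Set V, IndepSet G s ∧ s.ncard = k}

/-- A leaf is a vertex of degree 1. -/
def IsLeaf {V : Type*} (G : SimpleGraph V) (v : V) : Prop :=
  (G.neighborSet v).ncard = 1

/-!
Both sides equal `|V| - r`. The non-centers form an independent set of that size. Conversely,
root the tree: every center has at least two leaves but only one parent, so it has a leaf as a
child; these `r` center–child edges form a matching, and an independent set contains at most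
one endpoint of each matching edge. On the other side, counting the pairs (star, vertex) gives
`∑ n i = |V| + ∑ (m v - 1)` with `m v` the number of stars containing `v`, and a connection
vertex is adjacent exactly to the centers of the stars containing it, so its degree is `m v`.
-/

open Function

lemma indepNum_eq_of_forall_ncard_le {V : Type*} [Fintype V] {G : SimpleGraph V} {k : ℕ}
    (hk : ∃ s, IndepSet G s ∧ s.ncard = k) (hle : ∀ s, IndepSet G s → s.ncard ≤ k) :
    indepNum G = k :=
  IsGreatest.csSup_eq ⟨hk, by rintro _ ⟨s, hs, rfl⟩; exact hle s hs⟩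

/-- An independent set contains at most one endpoint of each edge of a matching. -/
lemma IndepSet.ncard_add_card_le {V ι : Type*} [Finite V] [Finite ι] {G : SimpleGraph V}
    {a b : ι → V} (hadj : ∀ i, G.Adj (a i) (b i)) (ha : Injective a) (hb : Injective b)
    (hab : ∀ i j, a i ≠ b j) {s : Set V} (hs : IndepSet G s) :
    s.ncard + Nat.card ι ≤ Nat.card V := by
  classical
  set f : ι → V := fun i => if a i ∈ s then b i else a i
  have hf : ∀ i, f i ∉ s := by
    intro i
    by_cases hi : a i ∈ s
    · simpa [f, hi] using fun hbi => hs hi hbi (hadj i).ne (hadj i)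
    · simp [f, hi]
  have hfinj : Injective f := by
    intro i j hij
    by_cases hi : a i ∈ s <;> by_cases hj : a j ∈ s <;>
      simp only [f, hi, hj, if_true, if_false] at hij
    · exact hb hij
    · exact absurd hij.symm (hab j i)
    · exact absurd hij (hab i j)
    · exact ha hij
  have hdisj : Disjoint s (Set.range f) :=
    Set.disjoint_right.2 fun _ ⟨i, hi⟩ => hi ▸ hf i
  rw [← Set.ncard_range_of_injective hfinj, ← Set.ncard_union_eq hdisj]
  exact Set.ncard_le_card _

lemma SimpleGraph.IsTree.exists_parent {V : Type*} {G : SimpleGraph V} (hG : G.IsTree) (ρ : V) :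
    ∃ par : V → V, ∀ ⦃x y⦄, G.Adj x y → par x = y ∨ par y = x := by
  choose p hp using fun v => (hG.existsUnique_path ρ v).exists
  refine ⟨fun x => (p x).penultimate, fun x y hxy => ?_⟩
  dsimp only
  by_cases hx : x ∈ (p y).support
  · right
    rw [hG.isAcyclic.path_concat (hp x) (hp y) hxy hx, SimpleGraph.Walk.penultimate_concat]
  · left
    have hy := hG.isAcyclic.mem_support_of_ne_mem_support_of_adj_of_isPath (hp x) (hp y) hxy hx
    rw [hG.isAcyclic.path_concat (hp y) (hp x) hxy.symm hy, SimpleGraph.Walk.penultimate_concat]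

lemma sum_ncard_eq_sum_ncard_setOf_mem {V ι : Type*} [Fintype V] [Fintype ι] (S : ι → Set V) :
    ∑ i, (S i).ncard = ∑ v, {i | v ∈ S i}.ncard := by
  classical
  have := Finset.sum_card_bipartiteAbove_eq_sum_card_bipartiteBelow
    (s := Finset.univ) (t := Finset.univ) (r := fun i v => v ∈ S i)
  simpa [Finset.bipartiteAbove, Finset.bipartiteBelow, Set.ncard_eq_toFinset_card'] using this

namespace StarConnection

variable {V ι : Type*} {T : SimpleGraph V} {c : ι → V} {S : ι → Set V}

def IsStarUnion (T : SimpleGraph V) (c : ι → V) (S : ι → Set V) : Prop :=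
  ∀ u v, T.Adj u v ↔ ∃ i, u ≠ v ∧ ((u = c i ∧ v ∈ S i) ∨ (v = c i ∧ u ∈ S i))

lemma center_injective (hcmem : ∀ i, c i ∈ S i) (hcenter : ∀ i j, c i ∈ S j → j = i) :
    Injective c :=
  fun i j hij => (hcenter i j (hij ▸ hcmem j)).symm

lemma ne_center_of_mem_of_mem (hcenter : ∀ i j, c i ∈ S j → j = i) {v : V} {i j : ι}
    (hij : i ≠ j) (hi : v ∈ S i) (hj : v ∈ S j) (k : ι) : v ≠ c k := by
  rintro rfl
  exact hij ((hcenter k i hi).trans (hcenter k j hj).symm)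

lemma center_adj
    (hAdj : IsStarUnion T c S)
    {i : ι} {x : V} (hx : x ∈ S i) (hxc : x ≠ c i) : T.Adj (c i) x :=
  (hAdj _ _).2 ⟨i, hxc.symm, .inl ⟨rfl, hx⟩⟩

lemma indepSet_compl_range_center
    (hAdj : IsStarUnion T c S) :
    IndepSet T (Set.range c)ᶜ := by
  intro u hu v hv _ huv
  obtain ⟨i, -, ⟨rfl, -⟩ | ⟨rfl, -⟩⟩ := (hAdj u v).1 huv
  exacts [hu ⟨i, rfl⟩, hv ⟨i, rfl⟩]

lemma exists_indepSet_ncard_eq [Finite V] (hc : Injective c)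
    (hAdj : IsStarUnion T c S) :
    ∃ s, IndepSet T s ∧ s.ncard = Nat.card V - Nat.card ι := by
  refine ⟨_, indepSet_compl_range_center hAdj, ?_⟩
  rw [← Set.ncard_range_of_injective hc, ← Set.ncard_add_ncard_compl (Set.range c)]
  omega

lemma ncard_neighborSet (hc : Injective c)
    (hAdj : IsStarUnion T c S)
    {v : V} (hv : ∀ k, v ≠ c k) : (T.neighborSet v).ncard = {i | v ∈ S i}.ncard := by
  have : T.neighborSet v = c '' {i | v ∈ S i} := by
    ext u
    simp only [SimpleGraph.mem_neighborSet, hAdj v, Set.mem_image, Set.mem_ofPred_eq]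
    constructor
    · rintro ⟨i, -, ⟨hvc, -⟩ | ⟨rfl, hvS⟩⟩
      exacts [absurd hvc (hv i), ⟨i, hvS, rfl⟩]
    · rintro ⟨i, hvS, rfl⟩
      exact ⟨i, hv i, .inr ⟨rfl, hvS⟩⟩
  rw [this, Set.ncard_image_of_injective _ hc]

lemma exists_child
    (hAdj : IsStarUnion T c S)
    {par : V → V} (hpar : ∀ ⦃x y⦄, T.Adj x y → par x = y ∨ par y = x) {i : ι}
    (hcmem : c i ∈ S i) (hS : 3 ≤ (S i).ncard) :
    ∃ ℓ ∈ S i, ℓ ≠ c i ∧ par ℓ = c i := by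
  have hleaves : 1 < (S i \ {c i}).ncard := by
    rw [Set.ncard_sdiff_singleton_of_mem hcmem]
    omega
  obtain ⟨a, ⟨haS, hac⟩, b, ⟨hbS, hbc⟩, hab⟩ :=
    (Set.one_lt_ncard_iff_nontrivial_and_finite.1 hleaves).1
  rcases hpar (center_adj hAdj haS hac) with hpa | hpa
  · rcases hpar (center_adj hAdj hbS hbc) with hpb | hpb
    · exact absurd (hpa.symm.trans hpb) hab
    · exact ⟨b, hbS, hbc, hpb⟩
  · exact ⟨a, haS, hac, hpa⟩

lemma ncard_add_card_le [Finite V] [Finite ι] (htree : T.IsTree)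
    (hAdj : IsStarUnion T c S)
    (hcmem : ∀ i, c i ∈ S i) (hcenter : ∀ i j, c i ∈ S j → j = i) (hS : ∀ i, 3 ≤ (S i).ncard)
    {s : Set V} (hs : IndepSet T s) : s.ncard + Nat.card ι ≤ Nat.card V := by
  obtain ⟨par, hpar⟩ := htree.exists_parent htree.connected.nonempty.some
  choose ℓ hℓS hℓc hℓpar using fun i => exists_child hAdj hpar (hcmem i) (hS i)
  have hc := center_injective hcmem hcenter
  refine hs.ncard_add_card_le (fun i => center_adj hAdj (hℓS i) (hℓc i)) hc
    (fun i j hij => hc (by rw [← hℓpar i, ← hℓpar j, hij])) ?_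
  intro i j hij
  obtain rfl : j = i := hcenter i j (hij ▸ hℓS j)
  exact hℓc _ hij.symm

lemma sum_ncard_eq_card_add_finsum [Fintype V] [Fintype ι] (hcover : ∀ v, ∃ i, v ∈ S i) :
    ∑ i, (S i).ncard =
      Nat.card V + ∑ᶠ v ∈ {v | ∃ i j, i ≠ j ∧ v ∈ S i ∧ v ∈ S j}, ({i | v ∈ S i}.ncard - 1) := by
  rw [sum_ncard_eq_sum_ncard_setOf_mem]
  set C := {v | ∃ i j, i ≠ j ∧ v ∈ S i ∧ v ∈ S j}
  have hsupp : (support fun v => {i | v ∈ S i}.ncard - 1) ⊆ C := by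
    intro v hv
    have : 1 < {i | v ∈ S i}.ncard := by simp only [mem_support] at hv; omega
    obtain ⟨i, hi, j, hj, hij⟩ := (Set.one_lt_ncard_iff_nontrivial_and_finite.1 this).1
    exact ⟨i, j, hij, hi, hj⟩
  have hpos : ∀ v, 0 < {i | v ∈ S i}.ncard := fun v =>
    (Set.ncard_pos (Set.toFinite _)).2 (hcover v)
  rw [← finsum_mem_inter_support, Set.inter_eq_right.2 hsupp, finsum_mem_support,
    finsum_eq_sum_of_fintype, Nat.card_eq_fintype_card, ← Finset.card_univ,
    Finset.card_eq_sum_ones, ← Finset.sum_add_distrib]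
  exact Finset.sum_congr rfl fun v _ => by have := hpos v; omega

end StarConnection

open StarConnection in
theorem starConnection_indepNum_general {V : Type*} [Fintype V]
    (T : SimpleGraph V) (r : ℕ) (n : Fin r → ℕ) (c : Fin r → V) (S : Fin r → Set V)
    (hn : ∀ i, 3 ≤ n i)
    (hScard : ∀ i, (S i).ncard = n i)
    (hcmem : ∀ i, c i ∈ S i)
    (hcover : ∀ v, ∃ i, v ∈ S i)
    (hAdj : ∀ u v, T.Adj u v ↔ ∃ i, u ≠ v ∧ ((u = c i ∧ v ∈ S i) ∨ (v = c i ∧ u ∈ S i)))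
    (hcenter : ∀ i j, c i ∈ S j → j = i)
    (htree : T.IsTree) :
    indepNum T = (∑ i, (n i - 1)) -
      ∑ᶠ v ∈ {v : V | ∃ i j, i ≠ j ∧ v ∈ S i ∧ v ∈ S j}, ((T.neighborSet v).ncard - 1) := by
  have hc := center_injective hcmem hcenter
  have hα : indepNum T = Nat.card V - r := by
    simpa using indepNum_eq_of_forall_ncard_le (exists_indepSet_ncard_eq hc hAdj)
      fun s hs => Nat.le_sub_of_add_le <|
        ncard_add_card_le htree hAdj hcmem hcenter (fun i => hScard i ▸ hn i) hs
  have hsum : ∑ i, (n i - 1) = ∑ i, (S i).ncard - r := by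
    simp [hScard, Finset.sum_tsub_distrib _ fun i _ => (hn i).trans' (by norm_num : 1 ≤ 3)]
  have hdeg : ∀ v ∈ {v : V | ∃ i j, i ≠ j ∧ v ∈ S i ∧ v ∈ S j},
      (T.neighborSet v).ncard - 1 = {i | v ∈ S i}.ncard - 1 := by
    rintro v ⟨i, j, hij, hi, hj⟩
    rw [ncard_neighborSet hc hAdj (ne_center_of_mem_of_mem hcenter hij hi hj)]
  rw [hα, hsum, sum_ncard_eq_card_add_finsum hcover, finsum_mem_congr rfl hdeg]
  omega

/-- For a star connection `T` built from `r ≥ 2` stars `S (n i)` (with centers `c i` and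
vertex sets `S i`, `n i ≥ 3`), glued only at non-center vertices, any two stars sharing at
most one vertex and no center lying in more than one star, the independence number equals
`∑ (n i - 1) - ∑ (deg v - 1)`, the second sum ranging over the connection vertices
(vertices lying in at least two stars). -/
theorem starConnection_indepNum {V : Type*} [Fintype V]
    (T : SimpleGraph V) (r : ℕ) (n : Fin r → ℕ) (c : Fin r → V) (S : Fin r → Set V)
    (hr : 2 ≤ r) (hn : ∀ i, 3 ≤ n i)
    (hScard : ∀ i, (S i).ncard = n i)
    (hcmem : ∀ i, c i ∈ S i)
    (hcover : ∀ v, ∃ i, v ∈ S i)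
    (hAdj : ∀ u v, T.Adj u v ↔ ∃ i, u ≠ v ∧ ((u = c i ∧ v ∈ S i) ∨ (v = c i ∧ u ∈ S i)))
    (hinter : ∀ i j, i ≠ j → (S i ∩ S j).Subsingleton)
    (hcenter : ∀ i j, c i ∈ S j → j = i)
    (htree : T.IsTree) :
    indepNum T = (∑ i, (n i - 1)) -
      ∑ᶠ v ∈ {v : V | ∃ i j, i ≠ j ∧ v ∈ S i ∧ v ∈ S j}, ((T.neighborSet v).ncard - 1) :=
  starConnection_indepNum_general T r n c S hn hScard hcmem hcover hAdj hcenter htree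
end

section
/- Let T_1 be a star connection built from r stars and T_2 a star connection built from s stars (each star having at least 3 vertices), with |V(T_1)| = |V(T_2)| and r < s. Then the independence number of T_1 is strictly greater than the independence number of T_2; consequently X_{T_1} ≠ X_{T_2} as chromatic symmetric functions. -/
/-- The chromatic symmetric function of `G`, given by its coefficients: the coefficient of the
monomial `∏ i, x i ^ d i` is the number of proper colorings `κ : V → ℕ` whose color class of
color `i` has exactly `d i` elements, for every `i`. -/
noncomputable def csf {V : Type*} [Fintype V] (G : SimpleGraph V) : (ℕ →₀ ℕ) → ℕ :=
  fun d => Nat.card {κ : V → ℕ // (∀ u v, G.Adj u v → κ u ≠ κ v) ∧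
    ∀ i : ℕ, Nat.card {v : V // κ v = i} = d i}

/-! Every edge of a star connection contains a center, so removing the `r` centers leaves an
independent set and `α(T) ≥ N - r`. Conversely, root the tree: a center has at least two
neighbours, only one of which can be its parent, so it has a child; since every vertex has a
single parent, the edges from the centers to chosen children form a matching of size `r`, and an
independent set misses a vertex of each of them, so `α(T) ≤ N - r`. Hence `α(T₁) > α(T₂)`.
Finally `α` is determined by the chromatic symmetric function: it is the largest `d 0` over the
color-class sizes `d` of proper colorings, i.e. over the monomials with nonzero coefficient. -/

section IndepNum

variable {V : Type*} [Fintype V] {G : SimpleGraph V}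

lemma bddAbove_ncard_indepSet (G : SimpleGraph V) :
    BddAbove {k | ∃ s : Set V, IndepSet G s ∧ s.ncard = k} :=
  ⟨Nat.card V, by rintro k ⟨s, -, rfl⟩; exact Set.ncard_le_card s⟩

lemma IndepSet.ncard_le_indepNum {s : Set V} (hs : IndepSet G s) : s.ncard ≤ indepNum G :=
  le_csSup (bddAbove_ncard_indepSet G) ⟨s, hs, rfl⟩

lemma exists_indepSet_ncard_eq_indepNum (G : SimpleGraph V) :
    ∃ s : Set V, IndepSet G s ∧ s.ncard = indepNum G :=
  Nat.sSup_mem (s := {k | ∃ s : Set V, IndepSet G s ∧ s.ncard = k})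
    ⟨0, ∅, Set.pairwise_empty _, Set.ncard_empty V⟩ (bddAbove_ncard_indepSet G)

/-- The complement of a vertex cover is independent. -/
lemma card_le_indepNum_add_ncard {C : Set V} (hC : ∀ u v, G.Adj u v → u ∈ C ∨ v ∈ C) :
    Nat.card V ≤ indepNum G + C.ncard := by
  have hindep : IndepSet G Cᶜ := fun u hu v hv _ huv => (hC u v huv).elim hu hv
  have := hindep.ncard_le_indepNum
  have := Set.ncard_add_ncard_compl C
  omega

/-- An independent set `A` contains at most one endpoint of each edge `c i — f i` of a matching,
so `i ↦ if c i ∈ A then f i else c i` injects the matching into `Aᶜ`. -/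
lemma indepNum_add_card_le_of_matching {ι : Type*} [Finite ι] {c f : ι → V}
    (hc : Function.Injective c) (hf : Function.Injective f) (hfc : ∀ i j, f i ≠ c j)
    (hadj : ∀ i, G.Adj (c i) (f i)) :
    indepNum G + Nat.card ι ≤ Nat.card V := by
  classical
  obtain ⟨A, hA, hAcard⟩ := exists_indepSet_ncard_eq_indepNum G
  let g : ι → V := fun i => if c i ∈ A then f i else c i
  have hgA : ∀ i, g i ∉ A := by
    intro i
    by_cases hci : c i ∈ A
    · simp only [g, hci, if_true]
      exact fun hfi => hA hci hfi (hadj i).ne (hadj i)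
    · simp [g, hci]
  have hg : Function.Injective g := by
    intro i j hij
    by_cases hci : c i ∈ A <;> by_cases hcj : c j ∈ A <;>
      simp only [g, hci, hcj, if_true, if_false] at hij
    exacts [hf hij, (hfc i j hij).elim, (hfc j i hij.symm).elim, hc hij]
  have hrange : Nat.card ι ≤ Aᶜ.ncard := by
    rw [← Set.ncard_range_of_injective hg]
    exact Set.ncard_le_ncard (Set.range_subset_iff.mpr hgA)
  have := Set.ncard_add_ncard_compl A
  omega

end IndepNum

namespace SimpleGraph

variable {V : Type*} {G : SimpleGraph V}

lemma IsTree.eq_of_adj_of_dist_lt (hG : G.IsTree) (u : V) {x y₁ y₂ : V}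
    (h₁ : G.Adj y₁ x) (h₂ : G.Adj y₂ x) (hd₁ : G.dist u y₁ < G.dist u x)
    (hd₂ : G.dist u y₂ < G.dist u x) : y₁ = y₂ := by
  obtain ⟨p₁, hp₁, hl₁⟩ := hG.connected.exists_path_of_dist u y₁
  obtain ⟨p₂, hp₂, hl₂⟩ := hG.connected.exists_path_of_dist u y₂
  have hlen : ∀ {y} (p : G.Walk u y) (h : G.Adj y x), p.length = G.dist u y →
      G.dist u y < G.dist u x → (p.concat h).length = G.dist u x := by
    intro y p h hp hd
    rcases hG.dist_eq_dist_add_one_of_adj u h with h' | h' <;>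
      simp only [Walk.length_concat] <;> omega
  have hpath := (hG.isAcyclic.subsingleton_path u x).elim
    ⟨_, (p₁.concat h₁).isPath_of_length_eq_dist (hlen p₁ h₁ hl₁ hd₁)⟩
    ⟨_, (p₂.concat h₂).isPath_of_length_eq_dist (hlen p₂ h₂ hl₂ hd₂)⟩
  exact (Walk.concat_inj (Subtype.mk.inj hpath)).1

lemma IsTree.exists_adj_dist_lt (hG : G.IsTree) (u : V) {x y₁ y₂ : V}
    (h₁ : G.Adj x y₁) (h₂ : G.Adj x y₂) (hne : y₁ ≠ y₂) :
    ∃ y, G.Adj x y ∧ G.dist u x < G.dist u y := by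
  by_contra! hfar
  have hnear : ∀ {y}, G.Adj x y → G.dist u y < G.dist u x := fun h =>
    lt_of_le_of_ne (hfar _ h) (hG.dist_ne_of_adj u h).symm
  exact hne (hG.eq_of_adj_of_dist_lt u h₁.symm h₂.symm (hnear h₁) (hnear h₂))

end SimpleGraph

section StarConnection

variable {V ι : Type*} {T : SimpleGraph V} {c : ι → V} {S : ι → Set V}

lemma exists_center_of_adj
    (hAdj : ∀ u v, T.Adj u v ↔ ∃ i, u ≠ v ∧ ((u = c i ∧ v ∈ S i) ∨ (v = c i ∧ u ∈ S i)))
    {u v : V} (huv : T.Adj u v) : u ∈ Set.range c ∨ v ∈ Set.range c := by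
  obtain ⟨i, -, ⟨rfl, -⟩ | ⟨rfl, -⟩⟩ := (hAdj u v).mp huv
  exacts [Or.inl ⟨i, rfl⟩, Or.inr ⟨i, rfl⟩]

lemma injective_center (hcmem : ∀ i, c i ∈ S i) (hcenter : ∀ i j, c i ∈ S j → j = i) :
    Function.Injective c :=
  fun i j hij => (hcenter i j (hij ▸ hcmem j)).symm

lemma adj_center_iff
    (hAdj : ∀ u v, T.Adj u v ↔ ∃ i, u ≠ v ∧ ((u = c i ∧ v ∈ S i) ∨ (v = c i ∧ u ∈ S i)))
    (hcmem : ∀ i, c i ∈ S i) (hcenter : ∀ i j, c i ∈ S j → j = i) (i : ι) (v : V) :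
    T.Adj (c i) v ↔ v ∈ S i ∧ v ≠ c i := by
  refine ⟨fun h => ?_, fun ⟨hv, hne⟩ => (hAdj _ _).mpr ⟨i, hne.symm, Or.inl ⟨rfl, hv⟩⟩⟩
  obtain ⟨j, hne, ⟨hij, hv⟩ | ⟨rfl, hci⟩⟩ := (hAdj _ _).mp h
  · obtain rfl := injective_center hcmem hcenter hij
    exact ⟨hv, hne.symm⟩
  · exact absurd (congrArg c (hcenter i j hci)).symm hne

/-- Rooting the tree, each center is matched with one of its children. -/
lemma exists_matching_of_isTree
    (hAdj : ∀ u v, T.Adj u v ↔ ∃ i, u ≠ v ∧ ((u = c i ∧ v ∈ S i) ∨ (v = c i ∧ u ∈ S i)))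
    (hcmem : ∀ i, c i ∈ S i) (hcenter : ∀ i j, c i ∈ S j → j = i)
    (hS : ∀ i, 3 ≤ (S i).ncard) (htree : T.IsTree) :
    ∃ f : ι → V, Function.Injective f ∧ (∀ i j, f i ≠ c j) ∧ ∀ i, T.Adj (c i) (f i) := by
  obtain ⟨root⟩ := htree.connected.nonempty
  have hadj := adj_center_iff hAdj hcmem hcenter
  have hchild : ∀ i, ∃ y, T.Adj (c i) y ∧ T.dist root (c i) < T.dist root y := by
    intro i
    have h3 := hS i
    have h2 : 1 < (S i \ {c i}).ncard := by
      rw [Set.ncard_sdiff_singleton_of_mem (hcmem i)]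
      omega
    have hfin : (S i \ {c i}).Finite := (Set.finite_of_ncard_pos (s := S i) (by omega)).sdiff
    obtain ⟨a, b, ha, hb, hab⟩ := (Set.one_lt_ncard_iff hfin).mp h2
    exact htree.exists_adj_dist_lt root ((hadj i a).mpr ha) ((hadj i b).mpr hb) hab
  choose f hf hfar using hchild
  refine ⟨f, fun i j hij => ?_, fun i j hij => ?_, hf⟩
  · have hcj : T.Adj (c j) (f i) := hij ▸ hf j
    exact injective_center hcmem hcenter <|
      htree.eq_of_adj_of_dist_lt root (hf i) hcj (hfar i) (hij ▸ hfar j)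
  · obtain ⟨hfi, hne⟩ := (hadj i (f i)).mp (hf i)
    obtain rfl := hcenter j i (hij ▸ hfi)
    exact hne hij

end StarConnection

section ChromaticSymmetricFunction

variable {V : Type*} [Fintype V]

/-- The exponent vector of the monomial contributed by `κ` to `csf`. -/
noncomputable def colorType (κ : V → ℕ) : ℕ →₀ ℕ :=
  Finsupp.onFinset (Finset.univ.image κ) (fun i => Nat.card {v : V // κ v = i}) fun i hi => by
    obtain ⟨⟨v, rfl⟩⟩ := (Nat.card_ne_zero.mp hi).1
    exact Finset.mem_image_of_mem κ (Finset.mem_univ v)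

lemma colorType_apply (κ : V → ℕ) (i : ℕ) : colorType κ i = Nat.card {v : V // κ v = i} := rfl

/-- The colors of such a coloring lie in `d.support`. -/
lemma finite_of_forall_card_colorClass_eq (d : ℕ →₀ ℕ) :
    Finite {κ : V → ℕ // ∀ i, Nat.card {v : V // κ v = i} = d i} := by
  refine Finite.of_injective (β := V → d.support)
    (fun κ v => ⟨κ.1 v, Finsupp.mem_support_iff.mpr ?_⟩) fun κ κ' h => ?_
  · rw [← κ.2 (κ.1 v)]
    exact Nat.card_ne_zero.mpr ⟨⟨⟨v, rfl⟩⟩, inferInstance⟩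
  · exact Subtype.ext (funext fun v => congrArg Subtype.val (congrFun h v))

variable {G : SimpleGraph V}

/-- `Nat.card` of an infinite type is `0`, hence the finiteness argument. -/
lemma csf_colorType_ne_zero {κ : V → ℕ} (hκ : ∀ u v, G.Adj u v → κ u ≠ κ v) :
    csf G (colorType κ) ≠ 0 := by
  have := finite_of_forall_card_colorClass_eq (V := V) (colorType κ)
  have : Finite {κ' : V → ℕ // (∀ u v, G.Adj u v → κ' u ≠ κ' v) ∧
      ∀ i, Nat.card {v : V // κ' v = i} = colorType κ i} :=
    Finite.of_injective _ (Subtype.impEmbedding _ _ fun _ h => h.2).injective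
  exact Nat.card_ne_zero.mpr ⟨⟨⟨κ, hκ, fun i => rfl⟩⟩, this⟩

lemma exists_coloring_of_csf_ne_zero {d : ℕ →₀ ℕ} (hd : csf G d ≠ 0) :
    ∃ κ : V → ℕ, (∀ u v, G.Adj u v → κ u ≠ κ v) ∧ ∀ i, Nat.card {v : V // κ v = i} = d i := by
  obtain ⟨⟨κ, hκ⟩⟩ := (Nat.card_ne_zero.mp hd).1
  exact ⟨κ, hκ⟩

/-- A maximum independent set is a color class of a proper coloring (all other vertices get
distinct colors); the corresponding coloring of the other graph has a color class of the same
size, which is independent. -/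
lemma indepNum_le_of_csf_eq {V' : Type*} [Fintype V'] {G' : SimpleGraph V'}
    (h : csf G = csf G') : indepNum G ≤ indepNum G' := by
  classical
  obtain ⟨A, hA, hAcard⟩ := exists_indepSet_ncard_eq_indepNum G
  let e := Fintype.equivFin V
  let κ : V → ℕ := fun v => if v ∈ A then 0 else e v + 1
  have hκ : ∀ u v, G.Adj u v → κ u ≠ κ v := by
    intro u v huv heq
    simp only [κ] at heq
    split_ifs at heq with hu hv hv
    · exact hA hu hv huv.ne huv
    · exact huv.ne (e.injective (Fin.ext (by omega)))
  have hclass : colorType κ 0 = indepNum G := by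
    rw [colorType_apply, ← hAcard, ← Nat.card_coe_set_eq]
    exact Nat.card_congr (Equiv.subtypeEquivRight fun v => by by_cases hv : v ∈ A <;> simp [κ, hv])
  obtain ⟨κ', hκ', hcard'⟩ := exists_coloring_of_csf_ne_zero (h ▸ csf_colorType_ne_zero hκ)
  have hindep : IndepSet G' {v | κ' v = 0} := fun u hu v hv _ huv =>
    hκ' u v huv (hu.trans hv.symm)
  calc indepNum G = Nat.card {v : V' // κ' v = 0} := (hclass ▸ hcard' 0).symm
    _ = ({v | κ' v = 0} : Set V').ncard := Nat.card_coe_set_eq _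
    _ ≤ indepNum G' := hindep.ncard_le_indepNum

end ChromaticSymmetricFunction

theorem starConnection_csf_ne_general {V₁ V₂ : Type*} [Fintype V₁] [Fintype V₂]
    (T₁ : SimpleGraph V₁) (r : ℕ) (c₁ : Fin r → V₁) (S₁ : Fin r → Set V₁)
    (T₂ : SimpleGraph V₂) (s : ℕ) (n₂ : Fin s → ℕ) (c₂ : Fin s → V₂) (S₂ : Fin s → Set V₂)
    (hAdj₁ : ∀ u v, T₁.Adj u v ↔ ∃ i, u ≠ v ∧ ((u = c₁ i ∧ v ∈ S₁ i) ∨ (v = c₁ i ∧ u ∈ S₁ i)))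
    (hn₂ : ∀ i, 3 ≤ n₂ i)
    (hScard₂ : ∀ i, (S₂ i).ncard = n₂ i)
    (hcmem₂ : ∀ i, c₂ i ∈ S₂ i)
    (hAdj₂ : ∀ u v, T₂.Adj u v ↔ ∃ i, u ≠ v ∧ ((u = c₂ i ∧ v ∈ S₂ i) ∨ (v = c₂ i ∧ u ∈ S₂ i)))
    (hcenter₂ : ∀ i j, c₂ i ∈ S₂ j → j = i)
    (htree₂ : T₂.IsTree)
    (hcard : Fintype.card V₁ = Fintype.card V₂) (hrs : r < s) :
    indepNum T₁ > indepNum T₂ ∧ csf T₁ ≠ csf T₂ := by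
  have hlower : Nat.card V₁ ≤ indepNum T₁ + r := by
    refine (card_le_indepNum_add_ncard fun u v => exists_center_of_adj hAdj₁).trans ?_
    simpa [Nat.card_coe_set_eq] using
      Nat.add_le_add_left (Finite.card_range_le c₁) (indepNum T₁)
  have hupper : indepNum T₂ + s ≤ Nat.card V₂ := by
    obtain ⟨f, hf, hfc, hadj⟩ := exists_matching_of_isTree hAdj₂ hcmem₂ hcenter₂
      (fun i => hScard₂ i ▸ hn₂ i) htree₂
    simpa using indepNum_add_card_le_of_matching (injective_center hcmem₂ hcenter₂) hf hfc hadj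
  have hlt : indepNum T₂ < indepNum T₁ := by
    simp only [Nat.card_eq_fintype_card] at hlower hupper
    omega
  exact ⟨hlt, fun h => (indepNum_le_of_csf_eq h).not_gt hlt⟩

/-- If `T₁` is a star connection built from `r` stars and `T₂` one built from `s` stars
(each star on at least 3 vertices), with the same number of vertices and `r < s`, then
`T₁` has strictly larger independence number, and consequently the chromatic symmetric
functions differ. -/
theorem starConnection_csf_ne {V₁ V₂ : Type*} [Fintype V₁] [Fintype V₂]
    (T₁ : SimpleGraph V₁) (r : ℕ) (n₁ : Fin r → ℕ) (c₁ : Fin r → V₁) (S₁ : Fin r → Set V₁)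
    (T₂ : SimpleGraph V₂) (s : ℕ) (n₂ : Fin s → ℕ) (c₂ : Fin s → V₂) (S₂ : Fin s → Set V₂)
    (hr : 2 ≤ r) (hn₁ : ∀ i, 3 ≤ n₁ i)
    (hScard₁ : ∀ i, (S₁ i).ncard = n₁ i)
    (hcmem₁ : ∀ i, c₁ i ∈ S₁ i)
    (hcover₁ : ∀ v, ∃ i, v ∈ S₁ i)
    (hAdj₁ : ∀ u v, T₁.Adj u v ↔ ∃ i, u ≠ v ∧ ((u = c₁ i ∧ v ∈ S₁ i) ∨ (v = c₁ i ∧ u ∈ S₁ i)))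
    (hinter₁ : ∀ i j, i ≠ j → (S₁ i ∩ S₁ j).Subsingleton)
    (hcenter₁ : ∀ i j, c₁ i ∈ S₁ j → j = i)
    (htree₁ : T₁.IsTree)
    (hs : 2 ≤ s) (hn₂ : ∀ i, 3 ≤ n₂ i)
    (hScard₂ : ∀ i, (S₂ i).ncard = n₂ i)
    (hcmem₂ : ∀ i, c₂ i ∈ S₂ i)
    (hcover₂ : ∀ v, ∃ i, v ∈ S₂ i)
    (hAdj₂ : ∀ u v, T₂.Adj u v ↔ ∃ i, u ≠ v ∧ ((u = c₂ i ∧ v ∈ S₂ i) ∨ (v = c₂ i ∧ u ∈ S₂ i)))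
    (hinter₂ : ∀ i j, i ≠ j → (S₂ i ∩ S₂ j).Subsingleton)
    (hcenter₂ : ∀ i j, c₂ i ∈ S₂ j → j = i)
    (htree₂ : T₂.IsTree)
    (hcard : Fintype.card V₁ = Fintype.card V₂) (hrs : r < s) :
    indepNum T₁ > indepNum T₂ ∧ csf T₁ ≠ csf T₂ :=
  starConnection_csf_ne_general T₁ r c₁ S₁ T₂ s n₂ c₂ S₂ hAdj₁ hn₂ hScard₂ hcmem₂ hAdj₂ hcenter₂
    htree₂ hcard hrs
end
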